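/- arXiv:2406.04336 — 4 statements merged into one kernel-verified Lean document; each statement's English description precedes it below -/
import Mathlib

section
/- For any two finite simple graphs G and H (with no isolated vertices) and vertices u, v ∈ V_G and x, y ∈ V_H: if 𝒫^{L̂_G}(u,v) = 𝒫^{L̂_H}(x,y) (equality of multisets), then SPD_G(u,v) = SPD_H(x,y). (The eigenspace projection invariant of the normalized Laplacian determines the shortest-path distance.) -/
open scoped Classical
open Matrix BigOperators

noncomputable section

namespace EPWL

/-! ### Generic node-coloring refinement with pairwise features in a type `α` -/

/-- The common nested type of round-`l` colors: `C 0 = Unit`,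
`C (l+1) = C l × Multiset (C l × α)`. -/
def Color (α : Type) : ℕ → Type
  | 0 => Unit
  | l + 1 => Color α l × Multiset (Color α l × α)

/-- The color refinement: `χ⁰(u) = ()` and
`χ^{l+1}(u) = (χ^l(u), {{(χ^l(v), f u v) : v}})`. -/
def colorFn {V : Type*} [Fintype V] {α : Type} (f : V → V → α) :
    (l : ℕ) → V → Color α l
  | 0 => fun _ => ()
  | l + 1 => fun u =>
      (colorFn f l u, Finset.univ.val.map fun v => (colorFn f l v, f u v))

/-- Two graphs (presented through their pairwise-feature functions) are
indistinguishable by the node-coloring refinement: at every round, the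
multisets of node colors agree. -/
def NodeIndist {V W : Type*} [Fintype V] [Fintype W] {α : Type}
    (f : V → V → α) (g : W → W → α) : Prop :=
  ∀ l : ℕ, Finset.univ.val.map (colorFn f l) = Finset.univ.val.map (colorFn g l)

/-- Atomic type of an ordered vertex pair: `0` if equal, `1` if adjacent,
`2` otherwise. -/
def atp {V : Type*} (G : SimpleGraph V) (u v : V) : ℕ :=
  if u = v then 0 else if G.Adj u v then 1 else 2

/-- 1-WL indistinguishability. -/
def WL1Indist {V W : Type*} [Fintype V] [Fintype W]
    (G : SimpleGraph V) (H : SimpleGraph W) : Prop :=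
  NodeIndist (atp G) (atp H)

/-! ### Graph matrices -/

/-- Real adjacency matrix. -/
def adjM {V : Type*} [Fintype V] (G : SimpleGraph V) : Matrix V V ℝ :=
  G.adjMatrix ℝ

/-- Real (diagonal) degree matrix. -/
def degM {V : Type*} [Fintype V] (G : SimpleGraph V) : Matrix V V ℝ :=
  Matrix.diagonal fun v => (G.degree v : ℝ)

/-- Laplacian matrix `L = D - A`. -/
def lapM {V : Type*} [Fintype V] (G : SimpleGraph V) : Matrix V V ℝ :=
  degM G - adjM G

/-- The diagonal matrix `D^{-1/2}`. -/
def invSqrtDegM {V : Type*} [Fintype V] (G : SimpleGraph V) : Matrix V V ℝ :=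
  Matrix.diagonal fun v => (Real.sqrt (G.degree v))⁻¹

/-- Normalized Laplacian `L̂ = D^{-1/2} L D^{-1/2}`. -/
def normLapM {V : Type*} [Fintype V] (G : SimpleGraph V) : Matrix V V ℝ :=
  invSqrtDegM G * lapM G * invSqrtDegM G

/-- Normalized adjacency matrix `Â = D^{-1/2} A D^{-1/2}`. -/
def normAdjM {V : Type*} [Fintype V] (G : SimpleGraph V) : Matrix V V ℝ :=
  invSqrtDegM G * adjM G * invSqrtDegM G

/-- The diagonal matrix `D⁻¹` of inverse degrees. -/
def invDegM {V : Type*} [Fintype V] (G : SimpleGraph V) : Matrix V V ℝ :=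
  Matrix.diagonal fun v => ((G.degree v : ℝ))⁻¹

/-- The random-walk matrix `D⁻¹ A`. -/
def rwM {V : Type*} [Fintype V] (G : SimpleGraph V) : Matrix V V ℝ :=
  invDegM G * adjM G

/-- The all-ones matrix `J`. -/
def allOnes (V : Type*) : Matrix V V ℝ := Matrix.of fun _ _ => 1

/-- A choice among the three graph matrices `A`, `L`, `L̂`. -/
inductive MatChoice | adj | lap | normLap

/-- The graph matrix associated with a choice. -/
def matOf {V : Type*} [Fintype V] (c : MatChoice) (G : SimpleGraph V) :
    Matrix V V ℝ :=
  match c with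
  | .adj => adjM G
  | .lap => lapM G
  | .normLap => normLapM G

/-! ### Spectral decompositions and the eigenspace projection invariant -/

/-- `IsSpectralDecomp M Λ P` says: `Λ` is the (finite) set of distinct
eigenvalues of the symmetric matrix `M` and, for `lam ∈ Λ`, `P lam` is the
orthogonal projection onto the eigenspace of `lam`. This is characterized
uniquely by: the `P lam` are symmetric idempotent nonzero matrices,
pairwise "orthogonal" (`P lam * P mu = 0` for `lam ≠ mu`), summing to the
identity, with `∑ lam • P lam = M`. -/
structure IsSpectralDecomp {n : Type*} [Fintype n]
    (M : Matrix n n ℝ) (Λ : Finset ℝ) (P : ℝ → Matrix n n ℝ) : Prop where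
  symm : ∀ lam ∈ Λ, (P lam)ᵀ = P lam
  idem : ∀ lam ∈ Λ, P lam * P lam = P lam
  nonzero : ∀ lam ∈ Λ, P lam ≠ 0
  orth : ∀ lam ∈ Λ, ∀ mu ∈ Λ, lam ≠ mu → P lam * P mu = 0
  sum_one : ∑ lam ∈ Λ, P lam = 1
  sum_smul : ∑ lam ∈ Λ, lam • P lam = M

/-- The eigenspace projection invariant
`𝒫^M(u,v) = {{(lam, P_lam(u,v)) : lam eigenvalue of M}}`. -/
def projInv {n : Type*} (Λ : Finset ℝ) (P : ℝ → Matrix n n ℝ) (u v : n) :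
    Multiset (ℝ × ℝ) :=
  Λ.val.map fun lam => (lam, P lam u v)

/-! ### Subgraph Weisfeiler-Lehman variants (SWL, PSWL) and 3-WL -/

/-- Round-`l` color type for SWL. -/
def SColor : ℕ → Type
  | 0 => ℕ
  | l + 1 => SColor l × Multiset (SColor l × ℕ)

/-- Initial pair color: `1` on the diagonal, `0` off it. -/
def initPairColor {V : Type*} (u v : V) : ℕ := if u = v then 1 else 0

/-- The SWL pair-coloring. -/
def swl {V : Type*} [Fintype V] (G : SimpleGraph V) :
    (l : ℕ) → V → V → SColor l
  | 0 => fun u v => initPairColor u v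
  | l + 1 => fun u v =>
      (swl G l u v, Finset.univ.val.map fun w => (swl G l u w, atp G v w))

/-- SWL indistinguishability. -/
def SWLIndist {V W : Type*} [Fintype V] [Fintype W]
    (G : SimpleGraph V) (H : SimpleGraph W) : Prop :=
  ∀ l : ℕ,
    ((Finset.univ : Finset (V × V)).val.map fun p => swl G l p.1 p.2) =
      ((Finset.univ : Finset (W × W)).val.map fun p => swl H l p.1 p.2)

/-- Round-`l` color type for PSWL. -/
def PSColor : ℕ → Type
  | 0 => ℕ
  | l + 1 => PSColor l × PSColor l × Multiset (PSColor l × ℕ)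

/-- The PSWL pair-coloring. -/
def pswl {V : Type*} [Fintype V] (G : SimpleGraph V) :
    (l : ℕ) → V → V → PSColor l
  | 0 => fun u v => initPairColor u v
  | l + 1 => fun u v =>
      (pswl G l u v, pswl G l v v,
        Finset.univ.val.map fun w => (pswl G l u w, atp G v w))

/-- PSWL indistinguishability. -/
def PSWLIndist {V W : Type*} [Fintype V] [Fintype W]
    (G : SimpleGraph V) (H : SimpleGraph W) : Prop :=
  ∀ l : ℕ,
    ((Finset.univ : Finset (V × V)).val.map fun p => pswl G l p.1 p.2) =
      ((Finset.univ : Finset (W × W)).val.map fun p => pswl H l p.1 p.2)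

/-- Round-`l` color type for 3-WL; the initial color records which of
`u, v, w` coincide and which of the pairs are edges. -/
def W3Color : ℕ → Type
  | 0 => Bool × Bool × Bool × Bool × Bool × Bool
  | l + 1 => W3Color l × Multiset (W3Color l × W3Color l × W3Color l)

/-- The 3-WL triple-coloring. -/
def wl3 {V : Type*} [Fintype V] (G : SimpleGraph V) :
    (l : ℕ) → V → V → V → W3Color l
  | 0 => fun u v w =>
      (decide (u = v), decide (u = w), decide (v = w),
        decide (G.Adj u v), decide (G.Adj u w), decide (G.Adj v w))
  | l + 1 => fun u v w =>
      (wl3 G l u v w,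
        Finset.univ.val.map fun z =>
          (wl3 G l z v w, wl3 G l u z w, wl3 G l u v z))

/-- 3-WL indistinguishability. -/
def WL3Indist {V W : Type*} [Fintype V] [Fintype W]
    (G : SimpleGraph V) (H : SimpleGraph W) : Prop :=
  ∀ l : ℕ,
    ((Finset.univ : Finset (V × V × V)).val.map fun p => wl3 G l p.1 p.2.1 p.2.2) =
      ((Finset.univ : Finset (W × W × W)).val.map fun p => wl3 H l p.1 p.2.1 p.2.2)

/-! ### Distances -/

/-- The shortest-path distance, valued in `ℕ∞`. -/
def spd {V : Type*} (G : SimpleGraph V) (u v : V) : ℕ∞ := G.edist u v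

/-- The four Penrose conditions characterizing the Moore–Penrose
pseudoinverse `X` of `B`. -/
def IsMoorePenrose {n : Type*} [Fintype n] (B X : Matrix n n ℝ) : Prop :=
  B * X * B = B ∧ X * B * X = X ∧ (B * X)ᵀ = B * X ∧ (X * B)ᵀ = X * B

/-- Resistance distance computed from (a Moore–Penrose pseudoinverse of)
the Laplacian: `X(u,u) + X(v,v) - 2X(u,v)` for vertices in the same
connected component, and `∞` otherwise. -/
def rdOf {V : Type*} (G : SimpleGraph V) (X : Matrix V V ℝ) (u v : V) :
    WithTop ℝ :=
  if G.Reachable u v then ((X u u + X v v - 2 * X u v : ℝ) : WithTop ℝ) else ⊤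

/-- Matrix exponential, as the everywhere-convergent power series
`exp B = ∑ Bⁿ/n!`. -/
def matExp {V : Type*} [Fintype V] (B : Matrix V V ℝ) : Matrix V V ℝ :=
  ∑' n : ℕ, ((n.factorial : ℝ))⁻¹ • B ^ n

/-! ### Connectivity notions -/

/-- Number of connected components. -/
def numComponents {V : Type*} (G : SimpleGraph V) : ℕ :=
  Nat.card G.ConnectedComponent

/-- A cut vertex: deleting it (and all incident edges) strictly increases
the number of connected components. -/
def IsCutVertex {V : Type*} (G : SimpleGraph V) (v : V) : Prop :=
  numComponents G < numComponents (G.induce {w : V | w ≠ v})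

/-- A cut edge: it is an edge whose deletion strictly increases the number
of connected components. -/
def IsCutEdge {V : Type*} (G : SimpleGraph V) (e : Sym2 V) : Prop :=
  e ∈ G.edgeSet ∧ numComponents G < numComponents (G.deleteEdges {e})

end EPWL

/-! Since `1 - L̂ = Â := D^{-1/2} A D^{-1/2}`, every polynomial in `L̂`, in particular `Âᵏ`, has
`(u,v)` entry `∑_λ p(λ) P_λ(u,v)`, which the projection invariant determines. The positive diagonal
scaling gives the nonnegative matrices `Âᵏ` and `Aᵏ` the same zero pattern, and `Aᵏ(u,v)` counts the
walks of length `k` from `u` to `v`; the distance is the least length of such a walk. -/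

open Polynomial

theorem Matrix.pow_apply_eq_zero_iff_of_nonneg {n R : Type*} [Fintype n] [DecidableEq n]
    [Semiring R] [PartialOrder R] [IsOrderedRing R] [NoZeroDivisors R] {A B : Matrix n n R}
    (hA : ∀ i j, 0 ≤ A i j) (hB : ∀ i j, 0 ≤ B i j) (hAB : ∀ i j, A i j = 0 ↔ B i j = 0)
    (k : ℕ) (i j : n) : (A ^ k) i j = 0 ↔ (B ^ k) i j = 0 := by
  induction k generalizing j with
  | zero => rfl
  | succ k ih =>
    simp only [pow_succ, Matrix.mul_apply]
    rw [Finset.sum_eq_zero_iff_of_nonneg fun l _ => mul_nonneg (pow_apply_nonneg hA k i l) (hA l j),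
      Finset.sum_eq_zero_iff_of_nonneg fun l _ => mul_nonneg (pow_apply_nonneg hB k i l) (hB l j)]
    simp only [mul_eq_zero, ih, hAB]

theorem SimpleGraph.edist_eq_of_exists_walk_length_iff {V W : Type*}
    {G : SimpleGraph V} {H : SimpleGraph W} {u v : V} {x y : W}
    (h : ∀ k, (∃ p : G.Walk u v, p.length = k) ↔ ∃ q : H.Walk x y, q.length = k) :
    G.edist u v = H.edist x y := by
  rw [SimpleGraph.edist_eq_sInf, SimpleGraph.edist_eq_sInf]
  congr 1
  ext n
  constructor
  · rintro ⟨p, rfl⟩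
    obtain ⟨q, hq⟩ := (h _).1 ⟨p, rfl⟩
    exact ⟨q, by simp only [hq]⟩
  · rintro ⟨q, rfl⟩
    obtain ⟨p, hp⟩ := (h _).2 ⟨q, rfl⟩
    exact ⟨p, by simp only [hp]⟩

namespace EPWL

namespace IsSpectralDecomp

variable {n : Type*} [Fintype n] {M : Matrix n n ℝ} {Λ : Finset ℝ} {P : ℝ → Matrix n n ℝ}

theorem proj_mul_eq_smul (hP : IsSpectralDecomp M Λ P) {lam : ℝ} (hlam : lam ∈ Λ) :
    P lam * M = lam • P lam := by
  rw [← hP.sum_smul, Finset.mul_sum, Finset.sum_eq_single lam]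
  · rw [Matrix.mul_smul, hP.idem lam hlam]
  · intro mu hmu hne
    rw [Matrix.mul_smul, hP.orth lam hlam mu hmu hne.symm, smul_zero]
  · exact absurd hlam

theorem pow_eq_sum (hP : IsSpectralDecomp M Λ P) (k : ℕ) :
    M ^ k = ∑ lam ∈ Λ, lam ^ k • P lam := by
  induction k with
  | zero => simp [hP.sum_one]
  | succ k ih =>
    rw [pow_succ, ih, Finset.sum_mul]
    refine Finset.sum_congr rfl fun lam hlam => ?_
    rw [Matrix.smul_mul, hP.proj_mul_eq_smul hlam, smul_smul, pow_succ]

theorem aeval_eq_sum (hP : IsSpectralDecomp M Λ P) (p : ℝ[X]) :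
    aeval M p = ∑ lam ∈ Λ, p.eval lam • P lam := by
  simp_rw [aeval_eq_sum_range, hP.pow_eq_sum, Finset.smul_sum, smul_smul, eval_eq_sum_range,
    Finset.sum_smul]
  exact Finset.sum_comm

theorem aeval_apply (hP : IsSpectralDecomp M Λ P) (p : ℝ[X]) (u v : n) :
    aeval M p u v = ((projInv Λ P u v).map fun q => p.eval q.1 * q.2).sum := by
  simp only [hP.aeval_eq_sum, Matrix.sum_apply, Matrix.smul_apply, smul_eq_mul, projInv,
    Multiset.map_map, Function.comp_def]
  rfl

end IsSpectralDecomp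

theorem aeval_apply_eq_of_projInv_eq {V W : Type*} [Fintype V] [Fintype W]
    {M : Matrix V V ℝ} {ΛM : Finset ℝ} {PM : ℝ → Matrix V V ℝ}
    {N : Matrix W W ℝ} {ΛN : Finset ℝ} {PN : ℝ → Matrix W W ℝ}
    (hM : IsSpectralDecomp M ΛM PM) (hN : IsSpectralDecomp N ΛN PN) {u v : V} {x y : W}
    (h : projInv ΛM PM u v = projInv ΛN PN x y) (p : ℝ[X]) :
    aeval M p u v = aeval N p x y := by
  rw [hM.aeval_apply, hN.aeval_apply, h]

section Graph

variable {V : Type*} [Fintype V] (G : SimpleGraph V)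

theorem adjM_pow_apply_ne_zero_iff (k : ℕ) (u v : V) :
    (adjM G ^ k) u v ≠ 0 ↔ ∃ p : G.Walk u v, p.length = k := by
  rw [adjM, SimpleGraph.adjMatrix_pow_apply_eq_card_walk, Nat.cast_ne_zero, ← Nat.pos_iff_ne_zero,
    Fintype.card_pos_iff]
  exact ⟨fun ⟨p⟩ => ⟨p, p.2⟩, fun ⟨p, hp⟩ => ⟨⟨p, hp⟩⟩⟩

theorem adjM_nonneg (u v : V) : 0 ≤ adjM G u v := by
  by_cases h : G.Adj u v <;> simp [adjM, h]

theorem normAdjM_apply (u v : V) :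
    normAdjM G u v = (√(G.degree u))⁻¹ * adjM G u v * (√(G.degree v))⁻¹ := by
  rw [normAdjM, invSqrtDegM, Matrix.mul_diagonal, Matrix.diagonal_mul]

theorem normAdjM_nonneg (u v : V) : 0 ≤ normAdjM G u v := by
  rw [normAdjM_apply]
  exact mul_nonneg (mul_nonneg (by positivity) (adjM_nonneg G u v)) (by positivity)

variable {G}

theorem normAdjM_apply_eq_zero_iff (hG : ∀ v, 0 < G.degree v) (u v : V) :
    normAdjM G u v = 0 ↔ adjM G u v = 0 := by
  have hu : (√(G.degree u))⁻¹ ≠ 0 := by have := hG u; positivity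
  have hv : (√(G.degree v))⁻¹ ≠ 0 := by have := hG v; positivity
  simp [normAdjM_apply, hu, hv]

theorem invSqrtDegM_mul_degM_mul_invSqrtDegM (hG : ∀ v, 0 < G.degree v) :
    invSqrtDegM G * degM G * invSqrtDegM G = 1 := by
  rw [invSqrtDegM, degM, Matrix.diagonal_mul_diagonal, Matrix.diagonal_mul_diagonal,
    ← Matrix.diagonal_one]
  congr 1
  funext v
  have hd : (0 : ℝ) < G.degree v := by exact_mod_cast hG v
  rw [mul_right_comm, ← mul_inv, Real.mul_self_sqrt hd.le, inv_mul_cancel₀ hd.ne']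

theorem one_sub_normLapM (hG : ∀ v, 0 < G.degree v) : 1 - normLapM G = normAdjM G := by
  rw [normLapM, lapM, mul_sub, sub_mul, invSqrtDegM_mul_degM_mul_invSqrtDegM hG, normAdjM,
    sub_sub_cancel]

end Graph

/-- The eigenspace projection invariant of the normalized
Laplacian at a vertex pair determines the shortest-path distance of that
pair. -/
theorem projInv_normLap_determines_spd {V W : Type*} [Fintype V] [Fintype W]
    (G : SimpleGraph V) (H : SimpleGraph W)
    (hG : ∀ v, 0 < G.degree v) (hH : ∀ w, 0 < H.degree w)
    (ΛG : Finset ℝ) (PG : ℝ → Matrix V V ℝ)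
    (hPG : IsSpectralDecomp (normLapM G) ΛG PG)
    (ΛH : Finset ℝ) (PH : ℝ → Matrix W W ℝ)
    (hPH : IsSpectralDecomp (normLapM H) ΛH PH)
    (u v : V) (x y : W)
    (h : projInv ΛG PG u v = projInv ΛH PH x y) :
    spd G u v = spd H x y := by
  have hpow (k : ℕ) : (normAdjM G ^ k) u v = (normAdjM H ^ k) x y := by
    have := aeval_apply_eq_of_projInv_eq hPG hPH h ((1 - X) ^ k)
    simpa only [map_pow, map_sub, map_one, aeval_X, one_sub_normLapM hG, one_sub_normLapM hH]
      using this
  have hzero (k : ℕ) : (adjM G ^ k) u v = 0 ↔ (adjM H ^ k) x y = 0 := by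
    rw [← Matrix.pow_apply_eq_zero_iff_of_nonneg (normAdjM_nonneg G) (adjM_nonneg G)
        (normAdjM_apply_eq_zero_iff hG),
      ← Matrix.pow_apply_eq_zero_iff_of_nonneg (normAdjM_nonneg H) (adjM_nonneg H)
        (normAdjM_apply_eq_zero_iff hH), hpow]
  refine SimpleGraph.edist_eq_of_exists_walk_length_iff fun k => ?_
  rw [← adjM_pow_apply_ne_zero_iff, ← adjM_pow_apply_ne_zero_iff, ne_eq, ne_eq, hzero]

end EPWL
end
end

section
/- Let G be a connected finite simple graph with at least two vertices, with Laplacian L_G and normalized Laplacian L̂_G, and let L_G^† and L̂_G^† denote their Moore–Penrose pseudoinverses. Then for all vertices u, v: L_G^†(u,u) + L_G^†(v,v) − 2 L_G^†(u,v) = deg_G(u)^{−1} L̂_G^†(u,u) + deg_G(v)^{−1} L̂_G^†(v,v) − 2 (deg_G(u) deg_G(v))^{−1/2} L̂_G^†(u,v). (The resistance distance can be expressed through the pseudoinverse of the normalized Laplacian and vertex degrees.) -/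
open scoped Classical
open Matrix BigOperators

noncomputable section

namespace EPWL

/-!
Put `f = e_u - e_v`. As `u` and `v` are connected, `f` is orthogonal to `ker L` (the constants), so
`f = L g` with `g = L^† f`, and `L L^† L = L` gives `fᵀ L^† f = gᵀ L g`. Moreover
`D^{-1/2} f = L̂ (D^{1/2} g)`, so the same identity for `L̂` gives
`(D^{-1/2} f)ᵀ L̂^† (D^{-1/2} f) = gᵀ L g` as well. Both pseudoinverses are symmetric (by
uniqueness), and expanding the two quadratic forms gives the two sides of the identity.
-/

namespace IsMoorePenrose

variable {n : Type*} [Fintype n] {B X : Matrix n n ℝ}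

theorem unique {X' : Matrix n n ℝ} (h : IsMoorePenrose B X) (h' : IsMoorePenrose B X') :
    X = X' := by
  obtain ⟨h1, h2, h3, h4⟩ := h
  obtain ⟨h1', h2', h3', h4'⟩ := h'
  have hBX : B * X = B * X' :=
    calc B * X = (B * X')ᵀ * (B * X)ᵀ := by rw [h3, h3', ← Matrix.mul_assoc, h1']
    _ = (B * X * B * X')ᵀ := by rw [← Matrix.transpose_mul, ← Matrix.mul_assoc]
    _ = B * X' := by rw [h1, h3']
  have hXB : X * B = X' * B :=
    calc X * B = (X * B)ᵀ * (X' * B)ᵀ := by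
          rw [h4, h4', ← Matrix.mul_assoc, Matrix.mul_assoc X B X', Matrix.mul_assoc X, h1']
    _ = (X' * (B * X * B))ᵀ := by simp only [← Matrix.transpose_mul, Matrix.mul_assoc]
    _ = X' * B := by rw [h1, h4']
  calc X = X * B * X := h2.symm
  _ = X' * B * X' := by rw [hXB, Matrix.mul_assoc, hBX, ← Matrix.mul_assoc]
  _ = X' := h2'

theorem transpose (h : IsMoorePenrose B X) : IsMoorePenrose Bᵀ Xᵀ := by
  obtain ⟨h1, h2, h3, h4⟩ := h
  refine ⟨?_, ?_, ?_, ?_⟩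
  · simpa only [Matrix.transpose_mul, Matrix.mul_assoc] using congrArg Matrix.transpose h1
  · simpa only [Matrix.transpose_mul, Matrix.mul_assoc] using congrArg Matrix.transpose h2
  · rw [← Matrix.transpose_mul, Matrix.transpose_transpose, h4]
  · rw [← Matrix.transpose_mul, Matrix.transpose_transpose, h3]

theorem transpose_eq_self (hB : Bᵀ = B) (h : IsMoorePenrose B X) : Xᵀ = X :=
  (hB ▸ h.transpose).unique h

theorem mulVec_mulVec_eq_self (h : IsMoorePenrose B X) {f : n → ℝ}
    (hf : ∀ z, Bᵀ *ᵥ z = 0 → f ⬝ᵥ z = 0) : B *ᵥ (X *ᵥ f) = f := by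
  -- `B * X` is an orthogonal projection fixing `range B`, and `r = f - B X f` lies in `ker Bᵀ`,
  -- so `r ⬝ᵥ r = f ⬝ᵥ r = 0`.
  set P := B * X with hP
  have hPB : P * B = B := h.1
  have hPP : P * P = P := by rw [hP, ← Matrix.mul_assoc, h.1]
  have hPt : Pᵀ = P := h.2.2.1
  set r := f - P *ᵥ f with hr
  have hBr : Bᵀ *ᵥ r = 0 := by
    rw [hr, Matrix.mulVec_sub, Matrix.mulVec_mulVec, ← hPt, ← Matrix.transpose_mul, hPB, sub_self]
  have hPr : P *ᵥ r = 0 := by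
    rw [hr, Matrix.mulVec_sub, Matrix.mulVec_mulVec, hPP, sub_self]
  have hrr : r ⬝ᵥ r = 0 := by
    calc r ⬝ᵥ r = f ⬝ᵥ r - f ⬝ᵥ (Pᵀ *ᵥ r) := by
          rw [Matrix.dotProduct_mulVec, Matrix.vecMul_transpose, hr, sub_dotProduct]
    _ = 0 := by rw [hPt, hPr, dotProduct_zero, hf r hBr, sub_zero]
  rw [Matrix.mulVec_mulVec, ← hP, eq_comm, ← sub_eq_zero]
  exact dotProduct_self_eq_zero.mp hrr

end IsMoorePenrose

section QuadraticForm

variable {n R : Type*} [Fintype n] [CommRing R]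

theorem vecMul_dotProduct_mulVec_mulVec {B X : Matrix n n R} (h : B * X * B = B) (g : n → R) :
    (g ᵥ* B) ⬝ᵥ (X *ᵥ (B *ᵥ g)) = g ⬝ᵥ (B *ᵥ g) := by
  rw [← dotProduct_mulVec, Matrix.mulVec_mulVec, Matrix.mulVec_mulVec, h]

theorem mulVec_dotProduct_mulVec_mulVec_of_conj {B S T Y : Matrix n n R} (hB : Bᵀ = B)
    (hS : Sᵀ = S) (hST : S * T = 1) (hY : S * B * S * Y * (S * B * S) = S * B * S) (g : n → R) :
    (B *ᵥ g) ⬝ᵥ ((S * Y * S) *ᵥ (B *ᵥ g)) = g ⬝ᵥ (B *ᵥ g) := by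
  have hN : (S * B * S)ᵀ = S * B * S := by
    simp only [Matrix.transpose_mul, hB, hS, Matrix.mul_assoc]
  have hNT : (S * B * S) *ᵥ (T *ᵥ g) = S *ᵥ (B *ᵥ g) := by
    simp only [Matrix.mulVec_mulVec, Matrix.mul_assoc, hST, Matrix.mul_one]
  have hTS : (T *ᵥ g) ᵥ* S = g := by
    rw [← Matrix.mulVec_transpose, hS, Matrix.mulVec_mulVec, hST, Matrix.one_mulVec]
  calc (B *ᵥ g) ⬝ᵥ ((S * Y * S) *ᵥ (B *ᵥ g))
      = ((T *ᵥ g) ᵥ* (S * B * S)) ⬝ᵥ (Y *ᵥ ((S * B * S) *ᵥ (T *ᵥ g))) := by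
        rw [← Matrix.mulVec_transpose, hN, hNT, ← Matrix.mulVec_mulVec, ← Matrix.mulVec_mulVec,
          Matrix.dotProduct_mulVec, ← Matrix.mulVec_transpose, hS]
    _ = g ⬝ᵥ (B *ᵥ g) := by
      rw [vecMul_dotProduct_mulVec_mulVec hY, hNT, Matrix.dotProduct_mulVec, hTS]

theorem single_sub_single_dotProduct [DecidableEq n] (u v : n) (z : n → R) :
    (Pi.single u 1 - Pi.single v 1) ⬝ᵥ z = z u - z v := by
  rw [sub_dotProduct, single_one_dotProduct, single_one_dotProduct]

theorem single_sub_single_dotProduct_mulVec [DecidableEq n] (M : Matrix n n R) (u v : n) :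
    (Pi.single u 1 - Pi.single v 1) ⬝ᵥ (M *ᵥ (Pi.single u 1 - Pi.single v 1)) =
      M u u + M v v - M u v - M v u := by
  simp only [single_sub_single_dotProduct, Matrix.mulVec_sub, Matrix.mulVec_single_one,
    Pi.sub_apply, Matrix.col_apply]
  ring

end QuadraticForm

section Graph

variable {V : Type*} [Fintype V] {G : SimpleGraph V}

theorem lapM_transpose (G : SimpleGraph V) : (lapM G)ᵀ = lapM G :=
  G.isSymm_lapMatrix (R := ℝ)

theorem lapM_mulVec_mulVec_single_sub_single {X : Matrix V V ℝ} (hX : IsMoorePenrose (lapM G) X)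
    {u v : V} (huv : G.Reachable u v) :
    lapM G *ᵥ (X *ᵥ (Pi.single u 1 - Pi.single v 1)) = Pi.single u 1 - Pi.single v 1 := by
  refine hX.mulVec_mulVec_eq_self fun z hz => ?_
  rw [lapM_transpose] at hz
  rw [single_sub_single_dotProduct, sub_eq_zero]
  exact G.lapMatrix_mulVec_eq_zero_iff_forall_reachable.mp hz u v huv

theorem invSqrtDegM_transpose (G : SimpleGraph V) : (invSqrtDegM G)ᵀ = invSqrtDegM G :=
  Matrix.diagonal_transpose _

theorem normLapM_transpose (G : SimpleGraph V) : (normLapM G)ᵀ = normLapM G := by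
  simp only [normLapM, Matrix.transpose_mul, invSqrtDegM_transpose, lapM_transpose,
    Matrix.mul_assoc]

theorem invSqrtDegM_mul_diagonal_sqrt (hdeg : ∀ w, 0 < G.degree w) :
    invSqrtDegM G * Matrix.diagonal (fun w => √(G.degree w : ℝ)) = 1 := by
  rw [invSqrtDegM, Matrix.diagonal_mul_diagonal, ← Matrix.diagonal_one]
  congr 1
  funext w
  exact inv_mul_cancel₀ (Real.sqrt_pos.mpr (Nat.cast_pos.mpr (hdeg w))).ne'

theorem invSqrtDegM_mul_mul_invSqrtDegM_apply (M : Matrix V V ℝ) (i j : V) :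
    (invSqrtDegM G * M * invSqrtDegM G) i j =
      (√(G.degree i : ℝ))⁻¹ * M i j * (√(G.degree j : ℝ))⁻¹ := by
  rw [invSqrtDegM, Matrix.mul_diagonal, Matrix.diagonal_mul]

theorem single_sub_single_dotProduct_pinv_lapM_eq_normLapM {X Y : Matrix V V ℝ}
    (hX : IsMoorePenrose (lapM G) X) (hY : normLapM G * Y * normLapM G = normLapM G)
    (hdeg : ∀ w, 0 < G.degree w) {u v : V} (huv : G.Reachable u v) :
    (Pi.single u 1 - Pi.single v 1) ⬝ᵥ (X *ᵥ (Pi.single u 1 - Pi.single v 1)) =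
      (Pi.single u 1 - Pi.single v 1) ⬝ᵥ
        ((invSqrtDegM G * Y * invSqrtDegM G) *ᵥ (Pi.single u 1 - Pi.single v 1)) := by
  obtain ⟨g, hg⟩ : ∃ g, lapM G *ᵥ g = Pi.single u 1 - Pi.single v 1 :=
    ⟨_, lapM_mulVec_mulVec_single_sub_single hX huv⟩
  rw [← hg, mulVec_dotProduct_mulVec_mulVec_of_conj (lapM_transpose G) (invSqrtDegM_transpose G)
    (invSqrtDegM_mul_diagonal_sqrt hdeg) hY, ← vecMul_dotProduct_mulVec_mulVec hX.1,
    ← Matrix.mulVec_transpose, lapM_transpose]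

end Graph

/-- On a connected graph with at least two vertices, the
resistance distance, expressed through the pseudoinverse of the Laplacian,
can also be expressed through the pseudoinverse of the normalized
Laplacian and vertex degrees. -/
theorem rd_via_normLap_pinv {V : Type*} [Fintype V]
    (G : SimpleGraph V) (hconn : G.Connected) (hcard : 1 < Fintype.card V)
    (X : Matrix V V ℝ) (hX : IsMoorePenrose (lapM G) X)
    (Y : Matrix V V ℝ) (hY : IsMoorePenrose (normLapM G) Y) :
    ∀ u v : V,
      X u u + X v v - 2 * X u v =
        ((G.degree u : ℝ))⁻¹ * Y u u + ((G.degree v : ℝ))⁻¹ * Y v v -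
          2 * (Real.sqrt ((G.degree u : ℝ) * (G.degree v : ℝ)))⁻¹ * Y u v := by
  intro u v
  have : Nontrivial V := Fintype.one_lt_card_iff_nontrivial.mp hcard
  have hdeg (w : V) : 0 < G.degree w := hconn.preconnected.degree_pos_of_nontrivial w
  have key := single_sub_single_dotProduct_pinv_lapM_eq_normLapM hX hY.1 hdeg
    (hconn.preconnected u v)
  have hXvu : X v u = X u v := congrFun₂ (hX.transpose_eq_self (lapM_transpose G)) u v
  have hYvu : Y v u = Y u v := congrFun₂ (hY.transpose_eq_self (normLapM_transpose G)) u v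
  simp only [single_sub_single_dotProduct_mulVec, invSqrtDegM_mul_mul_invSqrtDegM_apply,
    hXvu, hYvu] at key
  have hinv (w : V) : ((G.degree w : ℝ))⁻¹ = (√(G.degree w : ℝ))⁻¹ * (√(G.degree w : ℝ))⁻¹ := by
    rw [← mul_inv, Real.mul_self_sqrt (Nat.cast_nonneg _)]
  rw [hinv, hinv, Real.sqrt_mul (Nat.cast_nonneg _), mul_inv]
  linear_combination key

end EPWL
end
end

section
/- For any two finite simple graphs G and H (with no isolated vertices), vertices u, v ∈ V_G and x, y ∈ V_H: if deg_G(u) = deg_H(x), deg_G(v) = deg_H(y), and 𝒫^{L̂_G}(u,v) = 𝒫^{L̂_H}(x,y) (equality of multisets), then for every k ∈ ℕ, the k-step random-walk landing probabilities agree: ((D_G^{−1} A_G)^k)(u,v) = ((D_H^{−1} A_H)^k)(x,y). (Hence any PageRank distance Σ_k γ_k (D^{−1}A)^k(u,v) is determined by the degrees of the endpoints and the eigenspace projection invariant of the normalized Laplacian.) -/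
open scoped Classical
open Matrix BigOperators

noncomputable section

namespace EPWL

/-! ### Auxiliary lemmas for Statement 16 -/

section Aux
variable {n : Type*} [Fintype n]

lemma one_sub_eq_sum {M : Matrix n n ℝ} {Λ : Finset ℝ} {P : ℝ → Matrix n n ℝ}
    (h : IsSpectralDecomp M Λ P) :
    (1 : Matrix n n ℝ) - M = ∑ lam ∈ Λ, (1 - lam) • P lam := by
  calc (1 : Matrix n n ℝ) - M = (∑ lam ∈ Λ, P lam) - ∑ lam ∈ Λ, lam • P lam := by
        rw [h.sum_one, h.sum_smul]
    _ = ∑ lam ∈ Λ, (1 - lam) • P lam := by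
        rw [← Finset.sum_sub_distrib]
        refine Finset.sum_congr rfl fun lam _ => ?_
        rw [sub_smul, one_smul]

lemma pow_one_sub_eq_sum {M : Matrix n n ℝ} {Λ : Finset ℝ} {P : ℝ → Matrix n n ℝ}
    (h : IsSpectralDecomp M Λ P) (k : ℕ) :
    ((1 : Matrix n n ℝ) - M) ^ k = ∑ lam ∈ Λ, ((1 - lam) ^ k) • P lam := by
  induction k with
  | zero => simp [h.sum_one]
  | succ k ih =>
    rw [pow_succ, ih, one_sub_eq_sum h, Finset.sum_mul_sum]
    refine Finset.sum_congr rfl fun lam hlam => ?_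
    rw [Finset.sum_eq_single lam]
    · rw [smul_mul_assoc, mul_smul_comm, h.idem lam hlam, smul_smul, pow_succ]
    · intro mu hmu hne
      rw [smul_mul_assoc, mul_smul_comm, h.orth lam hlam mu hmu (Ne.symm hne),
        smul_zero, smul_zero]
    · intro habs; exact absurd hlam habs

end Aux

section AuxG
variable {V : Type*} [Fintype V]

/-- The diagonal matrix `D^{1/2}`. -/
def sqrtDegM (G : SimpleGraph V) : Matrix V V ℝ :=
  Matrix.diagonal fun v => Real.sqrt (G.degree v)

lemma invSqrt_mul_sqrt {G : SimpleGraph V} (hG : ∀ v, 0 < G.degree v) :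
    invSqrtDegM G * sqrtDegM G = 1 := by
  rw [invSqrtDegM, sqrtDegM, Matrix.diagonal_mul_diagonal]
  rw [← Matrix.diagonal_one, Matrix.diagonal_eq_diagonal_iff]
  intro v
  have hd : (0 : ℝ) < Real.sqrt (G.degree v) :=
    Real.sqrt_pos.2 (by exact_mod_cast hG v)
  field_simp

lemma sqrt_mul_invSqrt {G : SimpleGraph V} (hG : ∀ v, 0 < G.degree v) :
    sqrtDegM G * invSqrtDegM G = 1 := by
  rw [invSqrtDegM, sqrtDegM, Matrix.diagonal_mul_diagonal]
  rw [← Matrix.diagonal_one, Matrix.diagonal_eq_diagonal_iff]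
  intro v
  have hd : (0 : ℝ) < Real.sqrt (G.degree v) :=
    Real.sqrt_pos.2 (by exact_mod_cast hG v)
  field_simp

lemma invSqrt_mul_invSqrt (G : SimpleGraph V) :
    invSqrtDegM G * invSqrtDegM G = invDegM G := by
  rw [invSqrtDegM, invDegM, Matrix.diagonal_mul_diagonal,
    Matrix.diagonal_eq_diagonal_iff]
  intro v
  rw [← mul_inv, Real.mul_self_sqrt (by positivity)]

lemma rwM_eq {G : SimpleGraph V} (hG : ∀ v, 0 < G.degree v) :
    rwM G = invSqrtDegM G * normAdjM G * sqrtDegM G := by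
  rw [rwM, normAdjM, ← invSqrt_mul_invSqrt G]
  calc invSqrtDegM G * invSqrtDegM G * adjM G
      = invSqrtDegM G * invSqrtDegM G * adjM G * 1 := by rw [Matrix.mul_one]
    _ = invSqrtDegM G * (invSqrtDegM G * adjM G * invSqrtDegM G) * sqrtDegM G := by
        rw [← invSqrt_mul_sqrt hG]; simp only [Matrix.mul_assoc]

lemma normAdj_eq_one_sub {G : SimpleGraph V} (hG : ∀ v, 0 < G.degree v) :
    normAdjM G = 1 - normLapM G := by
  have h1 : invSqrtDegM G * degM G * invSqrtDegM G = 1 := by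
    rw [invSqrtDegM, degM, Matrix.diagonal_mul_diagonal, Matrix.diagonal_mul_diagonal,
      ← Matrix.diagonal_one, Matrix.diagonal_eq_diagonal_iff]
    intro v
    have hd : (0 : ℝ) < (G.degree v : ℝ) := by exact_mod_cast hG v
    have hs : Real.sqrt (G.degree v) * Real.sqrt (G.degree v) = (G.degree v : ℝ) :=
      Real.mul_self_sqrt (by positivity)
    have hsp : (0 : ℝ) < Real.sqrt (G.degree v) := Real.sqrt_pos.2 hd
    calc (Real.sqrt (G.degree v))⁻¹ * (G.degree v : ℝ) * (Real.sqrt (G.degree v))⁻¹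
        = (Real.sqrt (G.degree v))⁻¹ * (Real.sqrt (G.degree v) * Real.sqrt (G.degree v)) *
          (Real.sqrt (G.degree v))⁻¹ := by rw [hs]
      _ = 1 := by field_simp
  rw [normLapM, lapM, Matrix.mul_sub, Matrix.sub_mul, h1, normAdjM]
  abel

lemma rwM_pow_eq {G : SimpleGraph V} (hG : ∀ v, 0 < G.degree v) (k : ℕ) :
    rwM G ^ k = invSqrtDegM G * (normAdjM G) ^ k * sqrtDegM G := by
  induction k with
  | zero => simp [invSqrt_mul_sqrt hG]
  | succ k ih =>
    rw [pow_succ, ih, rwM_eq hG, pow_succ]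
    have hre : invSqrtDegM G * normAdjM G ^ k * sqrtDegM G *
        (invSqrtDegM G * normAdjM G * sqrtDegM G) =
        invSqrtDegM G * normAdjM G ^ k * (sqrtDegM G * invSqrtDegM G) *
          normAdjM G * sqrtDegM G := by
      simp only [Matrix.mul_assoc]
    rw [hre, sqrt_mul_invSqrt hG, Matrix.mul_one]
    simp only [Matrix.mul_assoc]

lemma rwM_pow_apply {G : SimpleGraph V} (hG : ∀ v, 0 < G.degree v)
    {Λ : Finset ℝ} {P : ℝ → Matrix V V ℝ} (hP : IsSpectralDecomp (normLapM G) Λ P)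
    (k : ℕ) (u v : V) :
    (rwM G ^ k) u v =
      (Real.sqrt (G.degree u))⁻¹ * Real.sqrt (G.degree v) *
        ((projInv Λ P u v).map fun p => (1 - p.1) ^ k * p.2).sum := by
  have hpow : (normAdjM G) ^ k = ∑ lam ∈ Λ, ((1 - lam) ^ k) • P lam := by
    rw [normAdj_eq_one_sub hG]; exact pow_one_sub_eq_sum hP k
  have hsum : ((projInv Λ P u v).map fun p => (1 - p.1) ^ k * p.2).sum
      = ∑ lam ∈ Λ, (1 - lam) ^ k * P lam u v := by
    rw [projInv, Multiset.map_map]; rfl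
  have happ : (normAdjM G ^ k) u v = ∑ lam ∈ Λ, (1 - lam) ^ k * P lam u v := by
    rw [hpow]
    simp [Matrix.sum_apply, Matrix.smul_apply, smul_eq_mul]
  rw [rwM_pow_eq hG k]
  simp only [invSqrtDegM, sqrtDegM, Matrix.mul_diagonal, Matrix.diagonal_mul]
  rw [happ, hsum]; ring

end AuxG

/-- Endpoint degrees together with the eigenspace
projection invariant of the normalized Laplacian determine all `k`-step
random-walk landing probabilities `(D⁻¹A)ᵏ(u,v)`. -/
theorem degrees_and_projInv_determine_rw {V W : Type*} [Fintype V] [Fintype W]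
    (G : SimpleGraph V) (H : SimpleGraph W)
    (hG : ∀ v, 0 < G.degree v) (hH : ∀ w, 0 < H.degree w)
    (ΛG : Finset ℝ) (PG : ℝ → Matrix V V ℝ)
    (hPG : IsSpectralDecomp (normLapM G) ΛG PG)
    (ΛH : Finset ℝ) (PH : ℝ → Matrix W W ℝ)
    (hPH : IsSpectralDecomp (normLapM H) ΛH PH)
    (u v : V) (x y : W)
    (hdu : G.degree u = H.degree x) (hdv : G.degree v = H.degree y)
    (hP : projInv ΛG PG u v = projInv ΛH PH x y) :
    ∀ k : ℕ, (rwM G ^ k) u v = (rwM H ^ k) x y := by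
  intro k
  rw [rwM_pow_apply hG hPG k u v, rwM_pow_apply hH hPH k x y, hP, hdu, hdv]

end EPWL
end
end

section
/- Let d be any pairwise feature assigning to each finite simple graph G (with no isolated vertices) a function d_G : V_G × V_G → ℝ. Suppose d is determined by EPWL colors and projections in the following sense: for all graphs G, H and vertices u, v ∈ V_G, x, y ∈ V_H, if χ^{(l)}_G(u) = χ^{(l)}_H(x) and χ^{(l)}_G(v) = χ^{(l)}_H(y) for every round l ≥ 0 of the EPWL colorings with matrix L̂, and 𝒫^{L̂_G}(u,v) = 𝒫^{L̂_H}(x,y), then d_G(u,v) = d_H(x,y). Then any two graphs that are EPWL-indistinguishable with respect to L̂ are also d-GD-WL-indistinguishable. -/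
open scoped Classical
open Matrix BigOperators

noncomputable section

namespace EPWL

/-! ### Auxiliary machinery for Statement 18 -/

/-- A default color. -/
def dflt {α : Type} : ∀ l, Color α l
  | 0 => ()
  | l + 1 => (dflt l, 0)

/-- First projection of a color at round `l+1`. -/
def colorFst {α : Type} {l : ℕ} : Color α (l+1) → Color α l := fun c => c.1


lemma joint_of_levelwise {V W : Type*} [Fintype V] [Fintype W] {T : ℕ → Type}
    (A : ∀ l, V → T l) (B : ∀ l, W → T l)
    (r : ∀ l, T (l+1) → T l)
    (hA : ∀ l v, r l (A (l+1) v) = A l v)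
    (hB : ∀ l w, r l (B (l+1) w) = B l w)
    (h : ∀ l, Finset.univ.val.map (A l) = Finset.univ.val.map (B l)) :
    (Finset.univ.val.map fun v => (fun l => A l v : ∀ l, T l)) =
      Finset.univ.val.map fun w => (fun l => B l w : ∀ l, T l) := by
  classical
  ext φ
  rw [Multiset.count_map, Multiset.count_map]
  have e1 : Multiset.card (Multiset.filter (fun a => φ = fun l => A l a) Finset.univ.val) =
      (Finset.univ.filter fun v => φ = fun l => A l v).card := rfl
  have e2 : Multiset.card (Multiset.filter (fun a => φ = fun l => B l a) Finset.univ.val) =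
      (Finset.univ.filter fun w => φ = fun l => B l w).card := rfl
  rw [e1, e2]
  by_cases hcoh : ∀ l, r l (φ (l+1)) = φ l
  · -- coherent case
    set SV : ℕ → Finset V := fun l => Finset.univ.filter (fun v => A l v = φ l) with hSV
    set SW : ℕ → Finset W := fun l => Finset.univ.filter (fun w => B l w = φ l) with hSW
    have hSVstep : ∀ l, SV (l+1) ⊆ SV l := by
      intro l v hv
      simp only [hSV, Finset.mem_filter, Finset.mem_univ, true_and] at hv ⊢
      rw [← hcoh l, ← hv, hA]
    have hSWstep : ∀ l, SW (l+1) ⊆ SW l := by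
      intro l w hw
      simp only [hSW, Finset.mem_filter, Finset.mem_univ, true_and] at hw ⊢
      rw [← hcoh l, ← hw, hB]
    have hSVanti : ∀ {l m}, l ≤ m → SV m ⊆ SV l := by
      intro l m hlm
      induction hlm with
      | refl => exact fun _ h => h
      | step _ ih => exact fun v hv => ih (hSVstep _ hv)
    have hSWanti : ∀ {l m}, l ≤ m → SW m ⊆ SW l := by
      intro l m hlm
      induction hlm with
      | refl => exact fun _ h => h
      | step _ ih => exact fun v hv => ih (hSWstep _ hv)
    have hcard : ∀ l, (SV l).card = (SW l).card := by
      intro l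
      have := h l
      have h1 : Multiset.count (φ l) (Finset.univ.val.map (A l)) =
          Multiset.count (φ l) (Finset.univ.val.map (B l)) := by rw [this]
      rw [Multiset.count_map, Multiset.count_map] at h1
      have e3 : Multiset.card (Multiset.filter (fun a => φ l = A l a) Finset.univ.val) =
          (Finset.univ.filter fun v => φ l = A l v).card := rfl
      have e4 : Multiset.card (Multiset.filter (fun a => φ l = B l a) Finset.univ.val) =
          (Finset.univ.filter fun w => φ l = B l w).card := rfl
      rw [e3, e4] at h1
      simp only [hSV, hSW]
      convert h1 using 2 <;> ext <;> simp [eq_comm]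
    -- find stabilization point
    obtain ⟨L, hL⟩ : ∃ L, ∀ l, (SV L).card ≤ (SV l).card := by
      have hne : (Set.range fun l => (SV l).card).Nonempty := ⟨(SV 0).card, 0, rfl⟩
      obtain ⟨L, hL⟩ := Nat.sInf_mem hne
      refine ⟨L, fun l => ?_⟩
      calc (SV L).card = sInf (Set.range fun l => (SV l).card) := hL
        _ ≤ (SV l).card := Nat.sInf_le ⟨l, rfl⟩
    have hVstab : ∀ l, L ≤ l → SV l = SV L :=
      fun l hl => Finset.eq_of_subset_of_card_le (hSVanti hl) (hL l)
    have hWstab : ∀ l, L ≤ l → SW l = SW L := by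
      intro l hl
      refine Finset.eq_of_subset_of_card_le (hSWanti hl) ?_
      rw [← hcard, ← hcard]; exact (hVstab l hl) ▸ le_rfl
    have hVset : (Finset.univ.filter fun v => φ = fun l => A l v) = SV L := by
      ext v
      simp only [Finset.mem_filter, Finset.mem_univ, true_and, hSV, funext_iff]
      constructor
      · intro hv; exact (hv L).symm
      · intro hv l
        have hvL : v ∈ SV L := by
          simp only [hSV, Finset.mem_filter, Finset.mem_univ, true_and]; exact hv
        rcases le_total l L with hlL | hLl
        · have := hSVanti hlL hvL
          simp only [hSV, Finset.mem_filter, Finset.mem_univ, true_and] at this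
          exact this.symm
        · have : v ∈ SV l := (hVstab l hLl) ▸ hvL
          simp only [hSV, Finset.mem_filter, Finset.mem_univ, true_and] at this
          exact this.symm
    have hWset : (Finset.univ.filter fun w => φ = fun l => B l w) = SW L := by
      ext w
      simp only [Finset.mem_filter, Finset.mem_univ, true_and, hSW, funext_iff]
      constructor
      · intro hw; exact (hw L).symm
      · intro hw l
        have hwL : w ∈ SW L := by
          simp only [hSW, Finset.mem_filter, Finset.mem_univ, true_and]; exact hw
        rcases le_total l L with hlL | hLl
        · have := hSWanti hlL hwL
          simp only [hSW, Finset.mem_filter, Finset.mem_univ, true_and] at this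
          exact this.symm
        · have : w ∈ SW l := (hWstab l hLl) ▸ hwL
          simp only [hSW, Finset.mem_filter, Finset.mem_univ, true_and] at this
          exact this.symm
    rw [hVset, hWset, hcard]
  · -- incoherent: both sides empty
    push_neg at hcoh
    obtain ⟨l0, hl0⟩ := hcoh
    have hVempty : (Finset.univ.filter fun v => φ = fun l => A l v) = ∅ := by
      ext v
      simp only [Finset.mem_filter, Finset.mem_univ, true_and, Finset.notMem_empty, iff_false]
      intro hv
      apply hl0
      rw [funext_iff] at hv
      rw [hv (l0+1), hA, ← hv l0]
    have hWempty : (Finset.univ.filter fun w => φ = fun l => B l w) = ∅ := by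
      ext w
      simp only [Finset.mem_filter, Finset.mem_univ, true_and, Finset.notMem_empty, iff_false]
      intro hw
      apply hl0
      rw [funext_iff] at hw
      rw [hw (l0+1), hB, ← hw l0]
    rw [hVempty, hWempty]
    simp

/-- If `d` is determined (within one graph) by full color sequences and the
pairwise feature, then vertices with equal full color sequences get equal
`d`-colors at every round. -/
lemma color_within {V : Type*} [Fintype V] {α : Type} (f : V → V → α) (d : V → V → ℝ)
    (hd : ∀ u v u' v' : V, (∀ l, colorFn f l u = colorFn f l u') →
      (∀ l, colorFn f l v = colorFn f l v') → f u v = f u' v' → d u v = d u' v') :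
    ∀ (l : ℕ) (u u' : V), (∀ l', colorFn f l' u = colorFn f l' u') →
      colorFn d l u = colorFn d l u' := by
  intro l
  induction l with
  | zero => intro u u' _; rfl
  | succ l IH =>
    intro u u' hfull
    have hlev : ∀ l', (Finset.univ.val.map fun v => (colorFn f l' v, f u v)) =
        Finset.univ.val.map fun v => (colorFn f l' v, f u' v) := by
      intro l'
      have h := hfull (l' + 1)
      simp only [colorFn] at h
      exact congrArg Prod.snd h
    have hjoint := joint_of_levelwise
      (T := fun l' => Color α l' × α)
      (fun l' v => (colorFn f l' v, f u v))
      (fun l' v => (colorFn f l' v, f u' v))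
      (fun l' p => (colorFst p.1, p.2))
      (fun l' v => rfl) (fun l' v => rfl) hlev
    have key : (Finset.univ.val.map fun v => (colorFn d l v, d u v)) =
        Finset.univ.val.map fun v => (colorFn d l v, d u' v) := by
      classical
      let F : (∀ l', Color α l' × α) → Color ℝ l × ℝ := fun ψ =>
        if h1 : ∃ v, (fun l' => (colorFn f l' v, f u v)) = ψ then
          (colorFn d l h1.choose, d u h1.choose)
        else if h2 : ∃ v, (fun l' => (colorFn f l' v, f u' v)) = ψ then
          (colorFn d l h2.choose, d u' h2.choose)
        else (dflt l, 0)
      have e1 : ∀ v : V, F (fun l' => (colorFn f l' v, f u v)) = (colorFn d l v, d u v) := by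
        intro v
        have h1 : ∃ v₀, (fun l' => (colorFn f l' v₀, f u v₀)) =
            (fun l' => (colorFn f l' v, f u v) : ∀ l', Color α l' × α) := ⟨v, rfl⟩
        show dite _ _ _ = _
        rw [dif_pos h1]
        have hspec := h1.choose_spec
        have hc : ∀ l', colorFn f l' h1.choose = colorFn f l' v :=
          fun l' => congrArg Prod.fst (congrFun hspec l')
        have hfv : f u h1.choose = f u v := congrArg Prod.snd (congrFun hspec 0)
        exact congrArg₂ Prod.mk (IH _ _ hc) (hd u h1.choose u v (fun _ => rfl) hc hfv)
      have e2 : ∀ v : V, F (fun l' => (colorFn f l' v, f u' v)) = (colorFn d l v, d u' v) := by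
        intro v
        show dite _ _ _ = _
        by_cases h1 : ∃ v₀, (fun l' => (colorFn f l' v₀, f u v₀)) =
            (fun l' => (colorFn f l' v, f u' v) : ∀ l', Color α l' × α)
        · rw [dif_pos h1]
          have hspec := h1.choose_spec
          have hc : ∀ l', colorFn f l' h1.choose = colorFn f l' v :=
            fun l' => congrArg Prod.fst (congrFun hspec l')
          have hfv : f u h1.choose = f u' v := congrArg Prod.snd (congrFun hspec 0)
          exact congrArg₂ Prod.mk (IH _ _ hc) (hd u h1.choose u' v hfull hc hfv)
        · rw [dif_neg h1]
          have h2 : ∃ v₀, (fun l' => (colorFn f l' v₀, f u' v₀)) =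
              (fun l' => (colorFn f l' v, f u' v) : ∀ l', Color α l' × α) := ⟨v, rfl⟩
          rw [dif_pos h2]
          have hspec := h2.choose_spec
          have hc : ∀ l', colorFn f l' h2.choose = colorFn f l' v :=
            fun l' => congrArg Prod.fst (congrFun hspec l')
          have hfv : f u' h2.choose = f u' v := congrArg Prod.snd (congrFun hspec 0)
          exact congrArg₂ Prod.mk (IH _ _ hc) (hd u' h2.choose u' v (fun _ => rfl) hc hfv)
      calc (Finset.univ.val.map fun v => (colorFn d l v, d u v))
          = (Finset.univ.val.map fun v =>
              (fun l' => (colorFn f l' v, f u v) : ∀ l', Color α l' × α)).map F := by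
            rw [Multiset.map_map]
            exact Multiset.map_congr rfl fun v _ => (e1 v).symm
        _ = (Finset.univ.val.map fun v =>
              (fun l' => (colorFn f l' v, f u' v) : ∀ l', Color α l' × α)).map F := by
            rw [hjoint]
        _ = Finset.univ.val.map fun v => (colorFn d l v, d u' v) := by
            rw [Multiset.map_map]
            exact Multiset.map_congr rfl fun v _ => e2 v
    simp only [colorFn]
    exact congrArg₂ Prod.mk (IH u u' hfull) key

/-- Cross-graph version: vertices (in possibly different graphs) with equal
full color sequences get equal `d`-colors at every round. -/
lemma color_cross {V W : Type*} [Fintype V] [Fintype W] {α : Type}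
    (f : V → V → α) (g : W → W → α) (d : V → V → ℝ) (d' : W → W → ℝ)
    (hdd : ∀ u v u' v' : V, (∀ l, colorFn f l u = colorFn f l u') →
      (∀ l, colorFn f l v = colorFn f l v') → f u v = f u' v' → d u v = d u' v')
    (hd'd' : ∀ x y x' y' : W, (∀ l, colorFn g l x = colorFn g l x') →
      (∀ l, colorFn g l y = colorFn g l y') → g x y = g x' y' → d' x y = d' x' y')
    (hdX : ∀ (u v : V) (x y : W), (∀ l, colorFn f l u = colorFn g l x) →
      (∀ l, colorFn f l v = colorFn g l y) → f u v = g x y → d u v = d' x y) :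
    ∀ (l : ℕ) (u : V) (x : W), (∀ l', colorFn f l' u = colorFn g l' x) →
      colorFn d l u = colorFn d' l x := by
  intro l
  induction l with
  | zero => intro u x _; rfl
  | succ l IH =>
    intro u x hfull
    have hlev : ∀ l', (Finset.univ.val.map fun v => (colorFn f l' v, f u v)) =
        Finset.univ.val.map fun w => (colorFn g l' w, g x w) := by
      intro l'
      have h := hfull (l' + 1)
      simp only [colorFn] at h
      exact congrArg Prod.snd h
    have hjoint := joint_of_levelwise
      (T := fun l' => Color α l' × α)
      (fun l' v => (colorFn f l' v, f u v))
      (fun l' w => (colorFn g l' w, g x w))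
      (fun l' p => (colorFst p.1, p.2))
      (fun l' v => rfl) (fun l' w => rfl) hlev
    have key : (Finset.univ.val.map fun v => (colorFn d l v, d u v)) =
        Finset.univ.val.map fun w => (colorFn d' l w, d' x w) := by
      classical
      let F : (∀ l', Color α l' × α) → Color ℝ l × ℝ := fun ψ =>
        if h1 : ∃ v, (fun l' => (colorFn f l' v, f u v)) = ψ then
          (colorFn d l h1.choose, d u h1.choose)
        else if h2 : ∃ w, (fun l' => (colorFn g l' w, g x w)) = ψ then
          (colorFn d' l h2.choose, d' x h2.choose)
        else (dflt l, 0)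
      have e1 : ∀ v : V, F (fun l' => (colorFn f l' v, f u v)) = (colorFn d l v, d u v) := by
        intro v
        have h1 : ∃ v₀, (fun l' => (colorFn f l' v₀, f u v₀)) =
            (fun l' => (colorFn f l' v, f u v) : ∀ l', Color α l' × α) := ⟨v, rfl⟩
        show dite _ _ _ = _
        rw [dif_pos h1]
        have hspec := h1.choose_spec
        have hc : ∀ l', colorFn f l' h1.choose = colorFn f l' v :=
          fun l' => congrArg Prod.fst (congrFun hspec l')
        have hfv : f u h1.choose = f u v := congrArg Prod.snd (congrFun hspec 0)
        exact congrArg₂ Prod.mk (color_within f d hdd l _ _ hc)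
          (hdd u h1.choose u v (fun _ => rfl) hc hfv)
      have e2 : ∀ w : W, F (fun l' => (colorFn g l' w, g x w)) = (colorFn d' l w, d' x w) := by
        intro w
        show dite _ _ _ = _
        by_cases h1 : ∃ v₀, (fun l' => (colorFn f l' v₀, f u v₀)) =
            (fun l' => (colorFn g l' w, g x w) : ∀ l', Color α l' × α)
        · rw [dif_pos h1]
          have hspec := h1.choose_spec
          have hc : ∀ l', colorFn f l' h1.choose = colorFn g l' w :=
            fun l' => congrArg Prod.fst (congrFun hspec l')
          have hfv : f u h1.choose = g x w := congrArg Prod.snd (congrFun hspec 0)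
          exact congrArg₂ Prod.mk (IH _ _ hc) (hdX u h1.choose x w hfull hc hfv)
        · rw [dif_neg h1]
          have h2 : ∃ w₀, (fun l' => (colorFn g l' w₀, g x w₀)) =
              (fun l' => (colorFn g l' w, g x w) : ∀ l', Color α l' × α) := ⟨w, rfl⟩
          rw [dif_pos h2]
          have hspec := h2.choose_spec
          have hc : ∀ l', colorFn g l' h2.choose = colorFn g l' w :=
            fun l' => congrArg Prod.fst (congrFun hspec l')
          have hfv : g x h2.choose = g x w := congrArg Prod.snd (congrFun hspec 0)
          exact congrArg₂ Prod.mk (color_within g d' hd'd' l _ _ hc)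
            (hd'd' x h2.choose x w (fun _ => rfl) hc hfv)
      calc (Finset.univ.val.map fun v => (colorFn d l v, d u v))
          = (Finset.univ.val.map fun v =>
              (fun l' => (colorFn f l' v, f u v) : ∀ l', Color α l' × α)).map F := by
            rw [Multiset.map_map]
            exact Multiset.map_congr rfl fun v _ => (e1 v).symm
        _ = (Finset.univ.val.map fun w =>
              (fun l' => (colorFn g l' w, g x w) : ∀ l', Color α l' × α)).map F := by
            rw [hjoint]
        _ = Finset.univ.val.map fun w => (colorFn d' l w, d' x w) := by
            rw [Multiset.map_map]
            exact Multiset.map_congr rfl fun w _ => e2 w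
    simp only [colorFn]
    exact congrArg₂ Prod.mk (IH u x hfull) key

/-- If a pairwise feature `d` is determined by the EPWL
colors of the endpoints (at every round, with matrix `L̂`) together with
the eigenspace projection invariant of the pair, then
EPWL-indistinguishability implies `d`-GD-WL-indistinguishability. -/
theorem epwl_bounds_gdwl_generic {V W : Type*} [Fintype V] [Fintype W]
    (G : SimpleGraph V) (H : SimpleGraph W)
    (hG : ∀ v, 0 < G.degree v) (hH : ∀ w, 0 < H.degree w)
    (ΛG : Finset ℝ) (PG : ℝ → Matrix V V ℝ)
    (hPG : IsSpectralDecomp (normLapM G) ΛG PG)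
    (ΛH : Finset ℝ) (PH : ℝ → Matrix W W ℝ)
    (hPH : IsSpectralDecomp (normLapM H) ΛH PH)
    (dG : V → V → ℝ) (dH : W → W → ℝ)
    (hdGG : ∀ u v u' v' : V,
      (∀ l, colorFn (projInv ΛG PG) l u = colorFn (projInv ΛG PG) l u') →
      (∀ l, colorFn (projInv ΛG PG) l v = colorFn (projInv ΛG PG) l v') →
      projInv ΛG PG u v = projInv ΛG PG u' v' → dG u v = dG u' v')
    (hdGH : ∀ (u v : V) (x y : W),
      (∀ l, colorFn (projInv ΛG PG) l u = colorFn (projInv ΛH PH) l x) →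
      (∀ l, colorFn (projInv ΛG PG) l v = colorFn (projInv ΛH PH) l y) →
      projInv ΛG PG u v = projInv ΛH PH x y → dG u v = dH x y)
    (hdHH : ∀ x y x' y' : W,
      (∀ l, colorFn (projInv ΛH PH) l x = colorFn (projInv ΛH PH) l x') →
      (∀ l, colorFn (projInv ΛH PH) l y = colorFn (projInv ΛH PH) l y') →
      projInv ΛH PH x y = projInv ΛH PH x' y' → dH x y = dH x' y')
    (hEP : NodeIndist (projInv ΛG PG) (projInv ΛH PH)) :
    NodeIndist dG dH := by
  intro l
  classical
  set f : V → V → Multiset (ℝ × ℝ) := projInv ΛG PG with hf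
  set g : W → W → Multiset (ℝ × ℝ) := projInv ΛH PH with hg
  have hjoint := joint_of_levelwise
    (T := Color (Multiset (ℝ × ℝ)))
    (fun l' v => colorFn f l' v)
    (fun l' w => colorFn g l' w)
    (fun l' c => colorFst c)
    (fun l' v => rfl) (fun l' w => rfl) hEP
  let F : (∀ l', Color (Multiset (ℝ × ℝ)) l') → Color ℝ l := fun ψ =>
    if h1 : ∃ v, (fun l' => colorFn f l' v) = ψ then colorFn dG l h1.choose
    else if h2 : ∃ w, (fun l' => colorFn g l' w) = ψ then colorFn dH l h2.choose
    else dflt l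
  have e1 : ∀ v : V, F (fun l' => colorFn f l' v) = colorFn dG l v := by
    intro v
    have h1 : ∃ v₀, (fun l' => colorFn f l' v₀) =
        (fun l' => colorFn f l' v : ∀ l', Color (Multiset (ℝ × ℝ)) l') := ⟨v, rfl⟩
    show dite _ _ _ = _
    rw [dif_pos h1]
    exact color_within f dG hdGG l _ _ (fun l' => congrFun h1.choose_spec l')
  have e2 : ∀ w : W, F (fun l' => colorFn g l' w) = colorFn dH l w := by
    intro w
    show dite _ _ _ = _
    by_cases h1 : ∃ v₀, (fun l' => colorFn f l' v₀) =
        (fun l' => colorFn g l' w : ∀ l', Color (Multiset (ℝ × ℝ)) l')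
    · rw [dif_pos h1]
      exact color_cross f g dG dH hdGG hdHH hdGH l _ _
        (fun l' => congrFun h1.choose_spec l')
    · rw [dif_neg h1]
      have h2 : ∃ w₀, (fun l' => colorFn g l' w₀) =
          (fun l' => colorFn g l' w : ∀ l', Color (Multiset (ℝ × ℝ)) l') := ⟨w, rfl⟩
      rw [dif_pos h2]
      exact color_within g dH hdHH l _ _ (fun l' => congrFun h2.choose_spec l')
  calc (Finset.univ.val.map fun v => colorFn dG l v)
      = (Finset.univ.val.map fun v =>
          (fun l' => colorFn f l' v : ∀ l', Color (Multiset (ℝ × ℝ)) l')).map F := by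
        rw [Multiset.map_map]
        exact Multiset.map_congr rfl fun v _ => (e1 v).symm
    _ = (Finset.univ.val.map fun w =>
          (fun l' => colorFn g l' w : ∀ l', Color (Multiset (ℝ × ℝ)) l')).map F := by
        rw [hjoint]
    _ = Finset.univ.val.map fun w => colorFn dH l w := by
        rw [Multiset.map_map]
        exact Multiset.map_congr rfl fun w _ => e2 w

end EPWL
end
end
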